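/- For all fixed reals 0 < τ ≤ t, lim_{n→∞} (1/α(n)) Σ_{k≥1} n t p_k ( e^{−p_k n (t + τ)} − e^{−p_k n t} ) = θ Γ(1 − θ) ( t (t + τ)^{θ−1} − t^θ ), and lim_{n→∞} (1/α(n)) Σ_{k≥1} n τ p_k ( e^{−p_k n (t + τ)} − e^{−p_k n t} ) = θ Γ(1 − θ) ( τ (t + τ)^{θ−1} − τ t^{θ−1} ), where Γ is the Gamma function. -/

import Mathlib

/-!
Write `M(s) = ∑ p_k e^{-p_k s}`. Since `u e^{-u} = ∫_0^u (1 - x) e^{-x} dx` and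
`#{k | x ≤ s p_k} = α(s / x)`, summing over `k` gives
`s M(s) = ∫_0^∞ (1 - x) e^{-x} α(s / x) dx`. As `α` is regularly varying of index `θ`,
`α(s / x) / α(s) → x^{-θ}`, and Potter's bound `α(s / x) ≤ 2^{θ'} x^{-θ'} α(s)` (`x ≤ 1`,
`θ < θ' < 1`) dominates the integrand, so `s M(s) / α(s) → ∫_0^∞ (1 - x) e^{-x} x^{-θ} dx
= Γ(1 - θ) - Γ(2 - θ) = θ Γ(1 - θ)`. Both sums are `n r (M(n (t + τ)) - M(n t))`, and
regular variation once more gives `n M(n c) / α(n) → θ Γ(1 - θ) c^{θ - 1}`.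
-/

open Filter Topology Real MeasureTheory Set

theorem Summable.finite_setOf_le {ι : Type*} {p : ι → ℝ} (hp : Summable p) {ε : ℝ} (hε : 0 < ε) :
    {i | ε ≤ p i}.Finite := by
  simpa using hp.tendsto_cofinite_zero.eventually (gt_mem_nhds hε)

theorem Set.Finite.ncard_eq_tsum_indicator {S : Set ℕ} (hS : S.Finite) :
    (S.ncard : ℝ) = ∑' k, S.indicator 1 k := by
  rw [tsum_eq_sum (s := hS.toFinset) (fun k hk => by simpa using hk),
    Finset.sum_congr rfl (fun k hk => Set.indicator_of_mem (hS.mem_toFinset.1 hk) _)]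
  simp [Set.ncard_eq_toFinset_card _ hS]

theorem abs_one_sub_le_one_add {x : ℝ} (hx : 0 ≤ x) : |1 - x| ≤ 1 + x :=
  abs_le.2 ⟨by linarith, by linarith⟩

theorem abs_one_sub_mul_exp_neg_le_one {x : ℝ} (hx : 0 ≤ x) : |(1 - x) * exp (-x)| ≤ 1 := by
  have h : |1 - x| ≤ exp x := (abs_one_sub_le_one_add hx).trans (by linarith [add_one_le_exp x])
  calc |(1 - x) * exp (-x)| = |1 - x| * exp (-x) := by rw [abs_mul, abs_of_pos (exp_pos _)]
    _ ≤ exp x * exp (-x) := by gcongr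
    _ = 1 := by rw [← exp_add, add_neg_cancel, exp_zero]

theorem integral_one_sub_mul_exp_neg (u : ℝ) :
    ∫ x in (0 : ℝ)..u, (1 - x) * exp (-x) = u * exp (-u) := by
  have hderiv (x : ℝ) : HasDerivAt (fun y => y * exp (-y)) ((1 - x) * exp (-x)) x :=
    ((hasDerivAt_id' x).mul (hasDerivAt_neg x).exp).congr_deriv (by ring)
  rw [intervalIntegral.integral_eq_sub_of_hasDerivAt (fun x _ => hderiv x)
    ((by fun_prop : Continuous fun x : ℝ => (1 - x) * exp (-x)).intervalIntegrable 0 u)]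
  simp

theorem integral_one_sub_mul_exp_neg_mul_ncard {a : ℕ → ℝ} (ha_nonneg : ∀ k, 0 ≤ a k)
    (ha : Summable a) :
    ∫ x in Ioi 0, (1 - x) * exp (-x) * {k | x ≤ a k}.ncard = ∑' k, a k * exp (-a k) := by
  set g : ℝ → ℝ := fun x => (1 - x) * exp (-x)
  have hg : Continuous g := by fun_prop
  set F : ℕ → ℝ → ℝ := fun k => (Ioc 0 (a k)).indicator g
  have hF_int (k : ℕ) : Integrable (F k) (volume.restrict (Ioi 0)) :=
    (hg.integrableOn_Ioc.integrable_indicator measurableSet_Ioc).restrict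
  have hF_setIntegral (k : ℕ) (f : ℝ → ℝ) :
      ∫ x in Ioi 0, (Ioc 0 (a k)).indicator f x = ∫ x in Ioc 0 (a k), f x := by
    rw [setIntegral_indicator measurableSet_Ioc, inter_eq_right.2 Ioc_subset_Ioi_self]
  have hF_norm (k : ℕ) : ∫ x in Ioi 0, ‖F k x‖ ≤ a k :=
    calc ∫ x in Ioi 0, ‖F k x‖ = ∫ x in Ioc 0 (a k), ‖g x‖ := by
          simp_rw [F, norm_indicator_eq_indicator_norm]; exact hF_setIntegral k _
      _ ≤ ∫ x in Ioc 0 (a k), (1 : ℝ) :=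
          setIntegral_mono_on hg.norm.integrableOn_Ioc (integrableOn_const (by simp))
            measurableSet_Ioc fun x hx => abs_one_sub_mul_exp_neg_le_one hx.1.le
      _ = a k := by simp [ha_nonneg k]
  have hF_sum : Summable fun k => ∫ x in Ioi 0, ‖F k x‖ :=
    ha.of_nonneg_of_le (fun k => integral_nonneg fun x => norm_nonneg _) hF_norm
  have hF_eq : ∀ x ∈ Ioi (0 : ℝ), g x * {k | x ≤ a k}.ncard = ∑' k, F k x := by
    intro x hx
    rw [(ha.finite_setOf_le hx).ncard_eq_tsum_indicator, ← tsum_mul_left]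
    refine tsum_congr fun k => ?_
    by_cases hk : x ≤ a k <;> simp [F, hk, hx.out]
  rw [setIntegral_congr_fun measurableSet_Ioi hF_eq,
    ← integral_tsum_of_summable_integral_norm hF_int hF_sum]
  refine tsum_congr fun k => ?_
  rw [hF_setIntegral, ← intervalIntegral.integral_of_le (ha_nonneg k),
    integral_one_sub_mul_exp_neg]

theorem integrableOn_exp_neg_mul_rpow {a : ℝ} (ha : -1 < a) :
    IntegrableOn (fun x => exp (-x) * x ^ a) (Ioi 0) := by
  simpa using GammaIntegral_convergent (s := a + 1) (by linarith)

theorem integrableOn_one_add_mul_exp_neg_mul_rpow_add_one {θ : ℝ} (hθ : θ < 1) (C : ℝ) :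
    IntegrableOn (fun x => (1 + x) * exp (-x) * (C * x ^ (-θ) + 1)) (Ioi 0) := by
  have h := (((integrableOn_exp_neg_mul_rpow (a := -θ) (by linarith)).const_mul C).add
    ((integrableOn_exp_neg_mul_rpow (a := 1 - θ) (by linarith)).const_mul C)).add
    ((integrableOn_exp_neg_mul_rpow (a := 0) (by norm_num)).add
      (integrableOn_exp_neg_mul_rpow (a := 1) (by norm_num)))
  refine IntegrableOn.congr_fun h (fun x (hx : 0 < x) => ?_) measurableSet_Ioi
  simp only [Pi.add_apply, rpow_zero, rpow_one, sub_eq_add_neg 1 θ, rpow_add hx]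
  ring

theorem integral_one_sub_mul_exp_neg_mul_rpow_neg {θ : ℝ} (hθ : θ < 1) :
    ∫ x in Ioi 0, (1 - x) * exp (-x) * x ^ (-θ) = θ * Gamma (1 - θ) := by
  have hsplit : ∀ x ∈ Ioi (0 : ℝ), (1 - x) * exp (-x) * x ^ (-θ)
      = exp (-x) * x ^ ((1 - θ) - 1) - exp (-x) * x ^ ((2 - θ) - 1) := fun x (hx : 0 < x) => by
    rw [show (2 : ℝ) - θ - 1 = 1 + -θ by ring, rpow_add hx, rpow_one]
    ring_nf
  rw [setIntegral_congr_fun measurableSet_Ioi hsplit,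
    integral_sub (GammaIntegral_convergent (by linarith)) (GammaIntegral_convergent (by linarith)),
    ← Gamma_eq_integral (by linarith), ← Gamma_eq_integral (by linarith),
    show 2 - θ = (1 - θ) + 1 by ring, Gamma_add_one (by linarith)]
  ring

def IsSlowlyVarying (L : ℝ → ℝ) : Prop :=
  ∀ c > (0 : ℝ), Tendsto (fun x => L (c * x) / L x) atTop (𝓝 1)

def IsRegularlyVarying (A : ℝ → ℝ) (θ : ℝ) : Prop :=
  ∀ c > (0 : ℝ), Tendsto (fun x => A (c * x) / A x) atTop (𝓝 (c ^ θ))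

theorem IsSlowlyVarying.isRegularlyVarying_of_eq_rpow_mul {L A : ℝ → ℝ} {θ : ℝ}
    (hL : IsSlowlyVarying L) (hA : ∀ x > 0, A x = x ^ θ * L x) : IsRegularlyVarying A θ := by
  intro c hc
  refine ((hL c hc).const_mul (c ^ θ)).congr' ?_ |>.trans (by rw [mul_one])
  filter_upwards [eventually_gt_atTop 0] with x hx
  rw [hA x hx, hA (c * x) (by positivity), mul_rpow hc.le hx.le]
  field_simp

theorem le_pow_mul_of_forall_le_mul_two {A : ℝ → ℝ} {K S : ℝ} (hK : 0 ≤ K) (hS : 0 ≤ S)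
    (h : ∀ s ≥ S, A (2 * s) ≤ K * A s) (m : ℕ) {s : ℝ} (hs : S ≤ s) :
    A (2 ^ m * s) ≤ K ^ m * A s := by
  induction m generalizing s with
  | zero => simp
  | succ m ih =>
    calc A (2 ^ (m + 1) * s) = A (2 ^ m * (2 * s)) := by rw [pow_succ, mul_assoc]
      _ ≤ K ^ m * A (2 * s) := ih (by linarith)
      _ ≤ K ^ m * (K * A s) := by gcongr; exact h s hs
      _ = K ^ (m + 1) * A s := by ring

section RegularVariation

variable {A : ℝ → ℝ} {θ : ℝ}

theorem IsRegularlyVarying.potter_bound (hA : IsRegularlyVarying A θ) (hA_mono : Monotone A)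
    (hA_pos : ∀ᶠ s in atTop, 0 < A s) {θ' : ℝ} (hθθ' : θ < θ') (hθ' : 0 ≤ θ') :
    ∀ᶠ s in atTop, ∀ x ∈ Ioc (0 : ℝ) 1, A (s / x) ≤ 2 ^ θ' * x ^ (-θ') * A s := by
  have hlt : (2 : ℝ) ^ θ < 2 ^ θ' := rpow_lt_rpow_of_exponent_lt one_lt_two hθθ'
  obtain ⟨S, hS⟩ := eventually_atTop.1 <|
    ((hA 2 two_pos).eventually_lt_const hlt).and (hA_pos.and (eventually_ge_atTop 0))
  have hdouble : ∀ s ≥ S, A (2 * s) ≤ 2 ^ θ' * A s := fun s hs => by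
    obtain ⟨hratio, hpos, -⟩ := hS s hs
    exact ((div_lt_iff₀ hpos).1 hratio).le
  filter_upwards [eventually_ge_atTop S] with s hs x ⟨hx₀, hx₁⟩
  have hs₀ : 0 ≤ s := (hS s hs).2.2
  obtain ⟨n, hn, hn'⟩ := exists_nat_pow_near (one_le_one_div hx₀ hx₁) one_lt_two
  calc A (s / x) ≤ A (2 ^ (n + 1) * s) := hA_mono <| by
        rw [div_eq_mul_one_div, mul_comm]; gcongr
    _ ≤ (2 ^ θ') ^ (n + 1) * A s :=
        le_pow_mul_of_forall_le_mul_two (by positivity) (hS S le_rfl).2.2 hdouble _ hs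
    _ = (2 ^ (n + 1)) ^ θ' * A s := by
        rw [rpow_pow_comm zero_le_two]
    _ ≤ (2 / x) ^ θ' * A s := by
        gcongr
        · exact (hS s hs).2.1.le
        · rw [pow_succ, mul_comm, div_eq_mul_one_div]; gcongr
    _ = 2 ^ θ' * x ^ (-θ') * A s := by rw [div_rpow zero_le_two hx₀.le, rpow_neg hx₀.le]; rfl

theorem IsRegularlyVarying.eventually_div_le (hA : IsRegularlyVarying A θ)
    (hA_mono : Monotone A) (hA_pos : ∀ᶠ s in atTop, 0 < A s) {θ' : ℝ} (hθθ' : θ < θ')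
    (hθ' : 0 ≤ θ') :
    ∀ᶠ s in atTop, ∀ x > 0, A (s / x) / A s ≤ 2 ^ θ' * x ^ (-θ') + 1 := by
  filter_upwards [hA.potter_bound hA_mono hA_pos hθθ' hθ', hA_pos, eventually_ge_atTop 0]
    with s hpotter hpos hs x hx
  have hterm : 0 ≤ 2 ^ θ' * x ^ (-θ') := by positivity
  rw [div_le_iff₀ hpos]
  rcases le_or_gt x 1 with hx₁ | hx₁
  · nlinarith [hpotter x ⟨hx, hx₁⟩]
  · nlinarith [hA_mono (div_le_self hs hx₁.le)]

theorem IsRegularlyVarying.tendsto_div_div (hA : IsRegularlyVarying A θ) {x : ℝ} (hx : 0 < x) :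
    Tendsto (fun s => A (s / x) / A s) atTop (𝓝 (x ^ (-θ))) := by
  simpa [div_eq_inv_mul, inv_rpow hx.le, rpow_neg hx.le] using hA x⁻¹ (inv_pos.2 hx)

theorem IsRegularlyVarying.tendsto_integral_one_sub_mul_exp_neg_mul_div
    (hA : IsRegularlyVarying A θ) (hA_mono : Monotone A) (hA_nonneg : 0 ≤ A)
    (hA_pos : ∀ᶠ s in atTop, 0 < A s) (hθ₀ : 0 ≤ θ) (hθ₁ : θ < 1) :
    Tendsto (fun s => (∫ x in Ioi 0, (1 - x) * exp (-x) * A (s / x)) / A s) atTop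
      (𝓝 (θ * Gamma (1 - θ))) := by
  -- `x^{-θ'}` must stay integrable at `0`, so `θ'` is taken strictly between `θ` and `1`.
  set θ' := (1 + θ) / 2 with hθ'
  have hθθ' : θ < θ' := by linarith
  have hθ'₀ : 0 ≤ θ' := by positivity
  rw [← integral_one_sub_mul_exp_neg_mul_rpow_neg hθ₁]
  simp_rw [← integral_div, mul_div_assoc]
  refine tendsto_integral_filter_of_dominated_convergence
    (fun x => (1 + x) * exp (-x) * (2 ^ θ' * x ^ (-θ') + 1))
    (Eventually.of_forall fun s => ?_) ?_
    (integrableOn_one_add_mul_exp_neg_mul_rpow_add_one (by linarith) _) ?_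
  · have := hA_mono.measurable
    fun_prop
  · filter_upwards [hA.eventually_div_le hA_mono hA_pos hθθ' hθ'₀, hA_pos] with s hratio hpos
    refine (ae_restrict_iff' measurableSet_Ioi).2 (ae_of_all _ fun x (hx : 0 < x) => ?_)
    have hq : 0 ≤ A (s / x) / A s := div_nonneg (hA_nonneg _) hpos.le
    rw [norm_mul, norm_mul, Real.norm_eq_abs, Real.norm_of_nonneg (exp_pos _).le,
      Real.norm_of_nonneg hq]
    gcongr
    · exact abs_one_sub_le_one_add hx.le
    · exact hratio x hx
  · exact (ae_restrict_iff' measurableSet_Ioi).2 (ae_of_all _ fun x (hx : 0 < x) =>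
      (hA.tendsto_div_div hx).const_mul _)

end RegularVariation

/-- The paper's `α(x)`. -/
noncomputable def largeAtomCount (p : ℕ → ℝ) (x : ℝ) : ℝ := {i | p i ≥ 1 / x}.ncard

/-- The expected (unscaled) missing mass `E ∑_k p_k 1{Π_k(s) = 0}` at Poisson time `s`. -/
noncomputable def meanMissingMass (p : ℕ → ℝ) (s : ℝ) : ℝ := ∑' k, p k * exp (-(p k * s))

section Occupancy

variable {p : ℕ → ℝ}

theorem largeAtomCount_div {s : ℝ} (hs : 0 < s) (x : ℝ) :
    largeAtomCount p (s / x) = {k | x ≤ s * p k}.ncard := by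
  simp only [largeAtomCount, one_div_div, ge_iff_le, div_le_iff₀ hs, mul_comm]

theorem largeAtomCount_nonneg (x : ℝ) : 0 ≤ largeAtomCount p x := Nat.cast_nonneg _

theorem monotone_largeAtomCount (hp_nonneg : ∀ k, 0 ≤ p k) (hp : Summable p) :
    Monotone (largeAtomCount p) := by
  intro x y hxy
  rcases le_or_gt x 0 with hx | hx
  · have hall : {i | p i ≥ 1 / x} = univ :=
      eq_univ_of_forall fun i => (one_div_nonpos.2 hx).trans (hp_nonneg i)
    simp only [largeAtomCount, hall, ncard_univ, Nat.card_eq_zero_of_infinite, Nat.cast_zero]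
    exact largeAtomCount_nonneg y
  · exact Nat.cast_le.2 <| ncard_le_ncard
      (fun i (hi : 1 / x ≤ p i) => (one_div_le_one_div_of_le hx hxy).trans hi)
      (hp.finite_setOf_le (one_div_pos.2 (hx.trans_le hxy)))

theorem eventually_largeAtomCount_pos (hp : Summable p) {k : ℕ} (hk : 0 < p k) :
    ∀ᶠ s in atTop, 0 < largeAtomCount p s := by
  filter_upwards [eventually_ge_atTop (1 / p k), eventually_gt_atTop 0] with s hs hs₀
  refine Nat.cast_pos.2 <| (ncard_pos (hp.finite_setOf_le (one_div_pos.2 hs₀))).2 ⟨k, ?_⟩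
  show 1 / s ≤ p k
  rwa [div_le_iff₀ hs₀, mul_comm, ← div_le_iff₀ hk]

theorem summable_mul_exp_neg_mul (hp_nonneg : ∀ k, 0 ≤ p k) (hp : Summable p) {s : ℝ}
    (hs : 0 ≤ s) : Summable fun k => p k * exp (-(p k * s)) :=
  hp.of_nonneg_of_le (fun k => by have := hp_nonneg k; positivity) fun k =>
    mul_le_of_le_one_right (hp_nonneg k) (exp_le_one_iff.2 (by nlinarith [hp_nonneg k]))

theorem mul_meanMissingMass_eq_integral (hp_nonneg : ∀ k, 0 ≤ p k) (hp : Summable p) {s : ℝ}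
    (hs : 0 < s) :
    s * meanMissingMass p s = ∫ x in Ioi 0, (1 - x) * exp (-x) * largeAtomCount p (s / x) := by
  rw [setIntegral_congr_fun measurableSet_Ioi fun x (hx : 0 < x) => by
      rw [largeAtomCount_div hs],
    integral_one_sub_mul_exp_neg_mul_ncard (fun k => by have := hp_nonneg k; positivity)
      (hp.mul_left s),
    meanMissingMass, ← tsum_mul_left]
  exact tsum_congr fun k => by ring_nf

theorem tsum_mul_mul_exp_sub_eq (hp_nonneg : ∀ k, 0 ≤ p k) (hp : Summable p) {s u v : ℝ}
    (hs : 0 ≤ s) (hu : 0 ≤ u) (hv : 0 ≤ v) (r : ℝ) :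
    ∑' k, s * r * p k * (exp (-(p k * s * u)) - exp (-(p k * s * v)))
      = r * (s * meanMissingMass p (s * u) - s * meanMissingMass p (s * v)) := by
  rw [meanMissingMass, meanMissingMass, ← tsum_mul_left, ← tsum_mul_left,
    ← (summable_mul_exp_neg_mul hp_nonneg hp (by positivity)).mul_left s |>.tsum_sub
      ((summable_mul_exp_neg_mul hp_nonneg hp (by positivity)).mul_left s), ← tsum_mul_left]
  exact tsum_congr fun k => by ring_nf

end Occupancy

section Asymptotics

variable {p : ℕ → ℝ} {θ : ℝ}

theorem tendsto_mul_meanMissingMass_div (hp_nonneg : ∀ k, 0 ≤ p k) (hp : Summable p) {k : ℕ}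
    (hk : 0 < p k) (hα : IsRegularlyVarying (largeAtomCount p) θ) (hθ₀ : 0 ≤ θ) (hθ₁ : θ < 1) :
    Tendsto (fun s => s * meanMissingMass p s / largeAtomCount p s) atTop
      (𝓝 (θ * Gamma (1 - θ))) := by
  refine (hα.tendsto_integral_one_sub_mul_exp_neg_mul_div (monotone_largeAtomCount hp_nonneg hp)
    largeAtomCount_nonneg (eventually_largeAtomCount_pos hp hk) hθ₀ hθ₁).congr' ?_
  filter_upwards [eventually_gt_atTop 0] with s hs
  rw [mul_meanMissingMass_eq_integral hp_nonneg hp hs]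

theorem tendsto_mul_meanMissingMass_mul_div (hp_nonneg : ∀ k, 0 ≤ p k) (hp : Summable p)
    {k : ℕ} (hk : 0 < p k) (hα : IsRegularlyVarying (largeAtomCount p) θ) (hθ₀ : 0 ≤ θ)
    (hθ₁ : θ < 1) {c : ℝ} (hc : 0 < c) :
    Tendsto (fun s => s * meanMissingMass p (s * c) / largeAtomCount p s) atTop
      (𝓝 (θ * Gamma (1 - θ) * c ^ (θ - 1))) := by
  have hcs : Tendsto (fun s => c * s) atTop atTop := tendsto_id.const_mul_atTop hc
  have hlim := (((tendsto_mul_meanMissingMass_div hp_nonneg hp hk hα hθ₀ hθ₁).comp hcs).mul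
    (hα c hc)).const_mul c⁻¹
  rw [show c⁻¹ * (θ * Gamma (1 - θ) * c ^ θ) = θ * Gamma (1 - θ) * c ^ (θ - 1) by
    rw [rpow_sub_one hc.ne']; ring] at hlim
  refine hlim.congr' ?_
  filter_upwards [hcs.eventually (eventually_largeAtomCount_pos hp hk)] with s hpos
  simp only [Function.comp_apply, mul_comm s c]
  field_simp

theorem tendsto_tsum_mul_mul_exp_sub_div (hp_nonneg : ∀ k, 0 ≤ p k) (hp : Summable p) {k : ℕ}
    (hk : 0 < p k) (hα : IsRegularlyVarying (largeAtomCount p) θ) (hθ₀ : 0 ≤ θ) (hθ₁ : θ < 1)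
    {u v : ℝ} (hu : 0 < u) (hv : 0 < v) (r : ℝ) :
    Tendsto (fun n : ℕ => 1 / largeAtomCount p n *
        ∑' k, (n : ℝ) * r * p k * (exp (-(p k * n * u)) - exp (-(p k * n * v))))
      atTop (𝓝 (θ * Gamma (1 - θ) * (r * u ^ (θ - 1) - r * v ^ (θ - 1)))) := by
  have hlim := ((((tendsto_mul_meanMissingMass_mul_div hp_nonneg hp hk hα hθ₀ hθ₁ hu).sub
    (tendsto_mul_meanMissingMass_mul_div hp_nonneg hp hk hα hθ₀ hθ₁ hv)).const_mul r).comp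
      tendsto_natCast_atTop_atTop)
  rw [show r * (θ * Gamma (1 - θ) * u ^ (θ - 1) - θ * Gamma (1 - θ) * v ^ (θ - 1))
    = θ * Gamma (1 - θ) * (r * u ^ (θ - 1) - r * v ^ (θ - 1)) by ring] at hlim
  refine hlim.congr fun n => ?_
  rw [tsum_mul_mul_exp_sub_eq hp_nonneg hp n.cast_nonneg hu.le hv.le, Function.comp_apply]
  ring

end Asymptotics

theorem limit_covariance_occupancy_missing_mass_general
    (p : ℕ → ℝ) (hp_pos : ∀ k, 0 < p k)
    (hp_sum : ∑' k, p k = 1)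
    (θ : ℝ) (hθ : θ ∈ Set.Ioo (0 : ℝ) 1)
    (L : ℝ → ℝ)
    (hL : ∀ c > (0 : ℝ), Tendsto (fun x => L (c * x) / L x) atTop (𝓝 1))
    (hα : ∀ x > (0 : ℝ), ((Set.ncard {i : ℕ | p i ≥ 1 / x} : ℝ)) = x ^ θ * L x)
    (τ t : ℝ) (hτ : 0 < τ) (hτt : τ ≤ t) :
    Tendsto (fun n : ℕ =>
        (1 / ((Set.ncard {i : ℕ | p i ≥ 1 / (n : ℝ)} : ℝ))) *
          ∑' k, (n : ℝ) * t * p k * (Real.exp (-(p k * (n : ℝ) * (t + τ)))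
            - Real.exp (-(p k * (n : ℝ) * t))))
      atTop
      (𝓝 (θ * Real.Gamma (1 - θ) * (t * (t + τ) ^ (θ - 1) - t ^ θ))) ∧
    Tendsto (fun n : ℕ =>
        (1 / ((Set.ncard {i : ℕ | p i ≥ 1 / (n : ℝ)} : ℝ))) *
          ∑' k, (n : ℝ) * τ * p k * (Real.exp (-(p k * (n : ℝ) * (t + τ)))
            - Real.exp (-(p k * (n : ℝ) * t))))
      atTop
      (𝓝 (θ * Real.Gamma (1 - θ) * (τ * (t + τ) ^ (θ - 1) - τ * t ^ (θ - 1)))) := by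
  have hp : Summable p := by
    by_contra h
    simp [tsum_eq_zero_of_not_summable h] at hp_sum
  have hαθ : IsRegularlyVarying (largeAtomCount p) θ :=
    IsSlowlyVarying.isRegularlyVarying_of_eq_rpow_mul hL hα
  have ht : 0 < t := hτ.trans_le hτt
  have hlim := tendsto_tsum_mul_mul_exp_sub_div (fun k => (hp_pos k).le) hp (hp_pos 0) hαθ
    hθ.1.le hθ.2 (add_pos ht hτ) ht
  refine ⟨?_, hlim τ⟩
  rw [show t ^ θ = t * t ^ (θ - 1) by rw [rpow_sub_one ht.ne']; field_simp]
  exact hlim t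

/-- Limit cross-covariances of the occupancy and scaled missing mass processes,
`θ ∈ (0,1)`: for `0 < τ ≤ t`,
`(1/α(n)) ∑_k n t p_k (e^{−p_k n(t+τ)} − e^{−p_k n t}) → θΓ(1−θ)(t(t+τ)^{θ−1} − t^θ)`
and
`(1/α(n)) ∑_k n τ p_k (e^{−p_k n(t+τ)} − e^{−p_k n t}) → θΓ(1−θ)(τ(t+τ)^{θ−1} − τ t^{θ−1})`. -/
theorem limit_covariance_occupancy_missing_mass
    (p : ℕ → ℝ) (hp_pos : ∀ k, 0 < p k) (hp_mono : Antitone p)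
    (hp_sum : ∑' k, p k = 1)
    (θ : ℝ) (hθ : θ ∈ Set.Ioo (0 : ℝ) 1)
    (L : ℝ → ℝ)
    (hL : ∀ c > (0 : ℝ), Tendsto (fun x => L (c * x) / L x) atTop (𝓝 1))
    (hα : ∀ x > (0 : ℝ), ((Set.ncard {i : ℕ | p i ≥ 1 / x} : ℝ)) = x ^ θ * L x)
    (τ t : ℝ) (hτ : 0 < τ) (hτt : τ ≤ t) :
    Tendsto (fun n : ℕ =>
        (1 / ((Set.ncard {i : ℕ | p i ≥ 1 / (n : ℝ)} : ℝ))) *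
          ∑' k, (n : ℝ) * t * p k * (Real.exp (-(p k * (n : ℝ) * (t + τ)))
            - Real.exp (-(p k * (n : ℝ) * t))))
      atTop
      (𝓝 (θ * Real.Gamma (1 - θ) * (t * (t + τ) ^ (θ - 1) - t ^ θ))) ∧
    Tendsto (fun n : ℕ =>
        (1 / ((Set.ncard {i : ℕ | p i ≥ 1 / (n : ℝ)} : ℝ))) *
          ∑' k, (n : ℝ) * τ * p k * (Real.exp (-(p k * (n : ℝ) * (t + τ)))
            - Real.exp (-(p k * (n : ℝ) * t))))
      atTop
      (𝓝 (θ * Real.Gamma (1 - θ) * (τ * (t + τ) ^ (θ - 1) - τ * t ^ (θ - 1)))) :=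
  limit_covariance_occupancy_missing_mass_general p hp_pos hp_sum θ hθ L hL hα τ t hτ hτt
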